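/- Every member of the linear system spanned by x^q y - x y^q, y^q z - y z^q, z^q x - z x^q over a field containing F_q defines a singular plane curve; i.e., for every (α,β,γ) ≠ 0 the curve {γ(x^q y - x y^q) + α(y^q z - y z^q) + β(z^q x - z x^q) = 0} is not smooth. -/

import Mathlib

open MvPolynomial

/-!
Write `F = γ (x^q y - x y^q) + α (y^q z - y z^q) + β (z^q x - z x^q)` as the determinant with
rows `(α, β, γ)`, `(x^q, y^q, z^q)`, `(x, y, z)`. In characteristic `p` the Frobenius row has
zero derivative, so `∂F/∂xᵢ` is the determinant with the last row replaced by `eᵢ`. At the point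
`v = (α^{1/q}, β^{1/q}, γ^{1/q})` the first two rows agree, so `F` and its gradient vanish there.
-/

section FrobeniusNet

variable {R : Type*} [CommRing R] {q : ℕ}

lemma pderiv_X_pow_eq_zero {σ : Type*} (hq : (q : R) = 0) (i j : σ) :
    pderiv i (X j ^ q : MvPolynomial σ R) = 0 := by
  rw [pderiv_pow, ← map_natCast (C : R →+* MvPolynomial σ R), hq, map_zero, zero_mul, zero_mul]

variable (q) in
noncomputable def frobeniusNet (c : Fin 3 → R) : MvPolynomial (Fin 3) R :=
  C (c 2) * (X 0 ^ q * X 1 - X 0 * X 1 ^ q) + C (c 0) * (X 1 ^ q * X 2 - X 1 * X 2 ^ q)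
    + C (c 1) * (X 2 ^ q * X 0 - X 2 * X 0 ^ q)

lemma eval_frobeniusNet_self (v : Fin 3 → R) :
    eval v (frobeniusNet q (v · ^ q)) = 0 := by
  simp only [frobeniusNet, map_add, map_sub, map_mul, map_pow, eval_C, eval_X]
  ring

lemma eval_pderiv_frobeniusNet_self (hq : (q : R) = 0) (v : Fin 3 → R) (i : Fin 3) :
    eval v (pderiv i (frobeniusNet q (v · ^ q))) = 0 := by
  simp only [frobeniusNet, map_add, map_sub, pderiv_C_mul]
  simp only [Derivation.leibniz, pderiv_X_pow_eq_zero hq, pderiv_X, smul_eq_mul, map_add, map_sub,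
    map_mul, map_pow, eval_C, eval_X, mul_zero, add_zero]
  fin_cases i <;> simp <;> ring

end FrobeniusNet

lemma exists_forall_pow_eq {K ι : Type*} [Field K] [IsAlgClosed K] {q : ℕ} (hq : q ≠ 0)
    (c : ι → K) : ∃ v : ι → K, ∀ i, v i ^ q = c i := by
  choose v hv using fun i => IsAlgClosed.exists_pow_nat_eq (c i) (Nat.pos_of_ne_zero hq)
  exact ⟨v, hv⟩

/-- Every member of the linear system spanned by `x^q y - x y^q`, `y^q z - y z^q`,
`z^q x - z x^q` over a field `k` containing `𝔽_q` is a singular plane curve: over the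
algebraic closure there is a point where the polynomial and all its partial derivatives
vanish. -/
theorem stmt12 (p e q : ℕ) [Fact p.Prime] (he : e ≠ 0) (hq : q = p ^ e)
    (k : Type) [Field k] [Algebra (GaloisField p e) k]
    (α β γ : k) (h0 : ¬(α = 0 ∧ β = 0 ∧ γ = 0))
    (F : MvPolynomial (Fin 3) (AlgebraicClosure k))
    (hF : F = C (algebraMap k (AlgebraicClosure k) γ) * (X 0 ^ q * X 1 - X 0 * X 1 ^ q)
            + C (algebraMap k (AlgebraicClosure k) α) * (X 1 ^ q * X 2 - X 1 * X 2 ^ q)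
            + C (algebraMap k (AlgebraicClosure k) β) * (X 2 ^ q * X 0 - X 2 * X 0 ^ q)) :
    ∃ v : Fin 3 → AlgebraicClosure k, v ≠ 0 ∧
      MvPolynomial.eval v F = 0 ∧ ∀ i, MvPolynomial.eval v (pderiv i F) = 0 := by
  set K := AlgebraicClosure k
  have : CharP k p := charP_of_injective_algebraMap (algebraMap (GaloisField p e) k).injective p
  have : CharP K p := charP_of_injective_algebraMap (algebraMap k K).injective p
  have hq0 : (q : K) = 0 := (CharP.cast_eq_zero_iff K p q).2 (hq ▸ dvd_pow_self p he)
  have hqne : q ≠ 0 := hq ▸ pow_ne_zero e (Fact.out : p.Prime).ne_zero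
  obtain ⟨v, hv⟩ := exists_forall_pow_eq hqne (algebraMap k K ∘ ![α, β, γ])
  have hFv : F = frobeniusNet q (v · ^ q) := by
    simp only [hF, frobeniusNet, hv]; rfl
  refine ⟨v, fun hv0 => h0 ?_, hFv ▸ eval_frobeniusNet_self v,
    fun i => hFv ▸ eval_pderiv_frobeniusNet_self hq0 v i⟩
  have hcoef : ∀ i, (algebraMap k K ∘ ![α, β, γ]) i = 0 := fun i => by
    rw [← hv, hv0, Pi.zero_apply, zero_pow hqne]
  simpa using And.intro (hcoef 0) (And.intro (hcoef 1) (hcoef 2))
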